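/- Let G2' be obtained from G2 (edges u1u2, u1u3, u2u3, u2u4, u3u5, u4u5, u4u6, u5u7, u6u7, u6u8, u7u8) by adding a new vertex u and the edge uu1. In every (1,2,2,2,2)-packing edge-coloring of G2', the edge uu1 receives color 1 (lies in the matching class). -/
import Mathlib

open SimpleGraph

/-- The distance between two edges: the minimum, over endpoints `a` of `e` and `b` of `f`,
of the vertex distance between `a` and `b` (as an extended natural number,
`⊤` when no endpoints are connected). -/
noncomputable def edgeDist {V : Type*} (G : SimpleGraph V) (e f : Sym2 V) : ℕ∞ :=
  sInf {d : ℕ∞ | ∃ a ∈ e, ∃ b ∈ f, G.edist a b = d}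

/-- An `S`-packing edge-coloring (in the closest-endpoint vertex-distance convention):
a map `c` assigning to each edge a color `i : Fin k` such that any two distinct
same-colored edges are at edge-distance at least `S i`.  A class with `S i = 1` is a
matching, `S i = 2` an induced matching, etc. -/
def IsPackingEdgeColoring {V : Type*} (G : SimpleGraph V) {k : ℕ} (S : Fin k → ℕ)
    (c : Sym2 V → Fin k) : Prop :=
  ∀ e ∈ G.edgeSet, ∀ f ∈ G.edgeSet, e ≠ f → c e = c f →
    (S (c e) : ℕ∞) ≤ edgeDist G e f

/-- The graph $G_2'$: $G_2$ (vertices $u_{i+1}$ = `i`, `i < 8`) together with a new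
vertex $u$ = `8` and the edge $uu_1$. -/
def G2' : SimpleGraph (Fin 9) :=
  SimpleGraph.fromRel (fun a b =>
    (a, b) ∈ ([(0,1),(0,2),(1,2),(1,3),(2,4),(3,4),(3,5),(4,6),(5,6),(5,7),(6,7),(8,0)] :
      List (Fin 9 × Fin 9)))

instance : DecidableRel G2'.Adj := fun a b =>
  decidable_of_iff _ (SimpleGraph.fromRel_adj _ a b).symm

lemma edgeDist_le_of {V : Type*} (G : SimpleGraph V) {e f : Sym2 V} {a b : V} {d : ℕ∞}
    (ha : a ∈ e) (hb : b ∈ f) (h : G.edist a b ≤ d) : edgeDist G e f ≤ d :=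
  le_trans (sInf_le ⟨a, ha, b, hb, rfl⟩) h

lemma S_ge_one : ∀ i : Fin 5, (1 : ℕ∞) ≤ (![1,2,2,2,2] i : ℕ) := by decide

lemma S_le_one : ∀ i : Fin 5, ((![1,2,2,2,2] i : ℕ) : ℕ∞) ≤ 1 → i = 0 := by decide

lemma share_ne {c : Sym2 (Fin 9) → Fin 5} (h : IsPackingEdgeColoring G2' ![1,2,2,2,2] c)
    {e f : Sym2 (Fin 9)} (he : e ∈ G2'.edgeSet) (hf : f ∈ G2'.edgeSet) {a : Fin 9}
    (ha : a ∈ e) (ha' : a ∈ f) (hne : e ≠ f) : c e ≠ c f := by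
  intro hc
  have h1 := h e he f hf hne hc
  have h2 : edgeDist G2' e f ≤ 0 := edgeDist_le_of _ ha ha' (by simp [edist_self])
  exact absurd (le_trans (S_ge_one (c e)) (le_trans h1 h2)) (by decide)

lemma close_imp {c : Sym2 (Fin 9) → Fin 5} (h : IsPackingEdgeColoring G2' ![1,2,2,2,2] c)
    {e f : Sym2 (Fin 9)} (he : e ∈ G2'.edgeSet) (hf : f ∈ G2'.edgeSet) {a b : Fin 9}
    (ha : a ∈ e) (hb : b ∈ f) (hab : G2'.Adj a b) (hne : e ≠ f) :
    c e = c f → c e = 0 := by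
  intro hc
  have h1 := h e he f hf hne hc
  have h2 : edgeDist G2' e f ≤ 1 := edgeDist_le_of _ ha hb
    (le_trans (edist_le hab.toWalk) (by simp [Adj.toWalk]))
  exact S_le_one _ (le_trans h1 h2)

set_option synthInstance.maxSize 5000 in
set_option synthInstance.maxHeartbeats 1000000 in
set_option maxRecDepth 10000 in
lemma key : ∀ x0 : Fin 5, ∀ x1 : Fin 5, x0 ≠ x1 → ∀ x2 : Fin 5, x0 ≠ x2 → x1 ≠ x2 → ∀ x3 : Fin 5, x0 ≠ x3 → (x1 = x3 → x1 = 0) → x2 ≠ x3 → ∀ x4 : Fin 5, (x0 = x4 → x0 = 0) → x1 ≠ x4 → x2 ≠ x4 → (x3 = x4 → x3 = 0) → ∀ x5 : Fin 5, (x0 = x5 → x0 = 0) → (x1 = x5 → x1 = 0) → (x2 = x5 → x2 = 0) → x3 ≠ x5 → x4 ≠ x5 → ∀ x6 : Fin 5, (x0 = x6 → x0 = 0) → (x2 = x6 → x2 = 0) → x3 ≠ x6 → (x4 = x6 → x4 = 0) → x5 ≠ x6 → ∀ x7 : Fin 5, (x1 = x7 → x1 = 0) → (x2 = x7 → x2 =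 0) → (x3 = x7 → x3 = 0) → x4 ≠ x7 → x5 ≠ x7 → (x6 = x7 → x6 = 0) → ∀ x8 : Fin 5, (x3 = x8 → x3 = 0) → (x4 = x8 → x4 = 0) → (x5 = x8 → x5 = 0) → x6 ≠ x8 → x7 ≠ x8 → ∀ x9 : Fin 5, (x3 = x9 → x3 = 0) → (x5 = x9 → x5 = 0) → x6 ≠ x9 → (x7 = x9 → x7 = 0) → x8 ≠ x9 → ∀ x10 : Fin 5, (x4 = x10 → x4 = 0) → (x5 = x10 → x5 = 0) → (x6 = x10 → x6 = 0) → x7 ≠ x10 → x8 ≠ x10 → x9 ≠ x10 → ∀ x11 : Fin 5, x0 ≠ x11 → x1 ≠ x11 → (x2 = x11 → x2 = 0) → (x3 = x11 → x3 = 0) → (x4 = x11 → x4 = 0) → x11 = 0 := by decide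

/-- In every $(1,2^4)$-packing edge-coloring of $G_2'$, the edge $uu_1$ gets the
matching color. -/
theorem stmt8 : ∀ c : Sym2 (Fin 9) → Fin 5,
    IsPackingEdgeColoring G2' ![1,2,2,2,2] c → c s(8,0) = 0 := by
  intro c h
  have he0 : s((0:Fin 9),1) ∈ G2'.edgeSet := by rw [mem_edgeSet]; decide
  have he1 : s((0:Fin 9),2) ∈ G2'.edgeSet := by rw [mem_edgeSet]; decide
  have he2 : s((1:Fin 9),2) ∈ G2'.edgeSet := by rw [mem_edgeSet]; decide
  have he3 : s((1:Fin 9),3) ∈ G2'.edgeSet := by rw [mem_edgeSet]; decide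
  have he4 : s((2:Fin 9),4) ∈ G2'.edgeSet := by rw [mem_edgeSet]; decide
  have he5 : s((3:Fin 9),4) ∈ G2'.edgeSet := by rw [mem_edgeSet]; decide
  have he6 : s((3:Fin 9),5) ∈ G2'.edgeSet := by rw [mem_edgeSet]; decide
  have he7 : s((4:Fin 9),6) ∈ G2'.edgeSet := by rw [mem_edgeSet]; decide
  have he8 : s((5:Fin 9),6) ∈ G2'.edgeSet := by rw [mem_edgeSet]; decide
  have he9 : s((5:Fin 9),7) ∈ G2'.edgeSet := by rw [mem_edgeSet]; decide
  have he10 : s((6:Fin 9),7) ∈ G2'.edgeSet := by rw [mem_edgeSet]; decide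
  have he11 : s((8:Fin 9),0) ∈ G2'.edgeSet := by rw [mem_edgeSet]; decide
  have h_0_1 : c s((0:Fin 9),1) ≠ c s((0:Fin 9),2) :=
    share_ne h he0 he1 (a := 0) (by decide) (by decide) (by decide)
  have h_0_2 : c s((0:Fin 9),1) ≠ c s((1:Fin 9),2) :=
    share_ne h he0 he2 (a := 1) (by decide) (by decide) (by decide)
  have h_1_2 : c s((0:Fin 9),2) ≠ c s((1:Fin 9),2) :=
    share_ne h he1 he2 (a := 2) (by decide) (by decide) (by decide)
  have h_0_3 : c s((0:Fin 9),1) ≠ c s((1:Fin 9),3) :=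
    share_ne h he0 he3 (a := 1) (by decide) (by decide) (by decide)
  have h_1_3 : c s((0:Fin 9),2) = c s((1:Fin 9),3) → c s((0:Fin 9),2) = 0 :=
    close_imp h he1 he3 (a := 0) (b := 1) (by decide) (by decide) (by decide) (by decide)
  have h_2_3 : c s((1:Fin 9),2) ≠ c s((1:Fin 9),3) :=
    share_ne h he2 he3 (a := 1) (by decide) (by decide) (by decide)
  have h_0_4 : c s((0:Fin 9),1) = c s((2:Fin 9),4) → c s((0:Fin 9),1) = 0 :=
    close_imp h he0 he4 (a := 0) (b := 2) (by decide) (by decide) (by decide) (by decide)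
  have h_1_4 : c s((0:Fin 9),2) ≠ c s((2:Fin 9),4) :=
    share_ne h he1 he4 (a := 2) (by decide) (by decide) (by decide)
  have h_2_4 : c s((1:Fin 9),2) ≠ c s((2:Fin 9),4) :=
    share_ne h he2 he4 (a := 2) (by decide) (by decide) (by decide)
  have h_3_4 : c s((1:Fin 9),3) = c s((2:Fin 9),4) → c s((1:Fin 9),3) = 0 :=
    close_imp h he3 he4 (a := 1) (b := 2) (by decide) (by decide) (by decide) (by decide)
  have h_0_5 : c s((0:Fin 9),1) = c s((3:Fin 9),4) → c s((0:Fin 9),1) = 0 :=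
    close_imp h he0 he5 (a := 1) (b := 3) (by decide) (by decide) (by decide) (by decide)
  have h_1_5 : c s((0:Fin 9),2) = c s((3:Fin 9),4) → c s((0:Fin 9),2) = 0 :=
    close_imp h he1 he5 (a := 2) (b := 4) (by decide) (by decide) (by decide) (by decide)
  have h_2_5 : c s((1:Fin 9),2) = c s((3:Fin 9),4) → c s((1:Fin 9),2) = 0 :=
    close_imp h he2 he5 (a := 1) (b := 3) (by decide) (by decide) (by decide) (by decide)
  have h_3_5 : c s((1:Fin 9),3) ≠ c s((3:Fin 9),4) :=
    share_ne h he3 he5 (a := 3) (by decide) (by decide) (by decide)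
  have h_4_5 : c s((2:Fin 9),4) ≠ c s((3:Fin 9),4) :=
    share_ne h he4 he5 (a := 4) (by decide) (by decide) (by decide)
  have h_0_6 : c s((0:Fin 9),1) = c s((3:Fin 9),5) → c s((0:Fin 9),1) = 0 :=
    close_imp h he0 he6 (a := 1) (b := 3) (by decide) (by decide) (by decide) (by decide)
  have h_2_6 : c s((1:Fin 9),2) = c s((3:Fin 9),5) → c s((1:Fin 9),2) = 0 :=
    close_imp h he2 he6 (a := 1) (b := 3) (by decide) (by decide) (by decide) (by decide)
  have h_3_6 : c s((1:Fin 9),3) ≠ c s((3:Fin 9),5) :=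
    share_ne h he3 he6 (a := 3) (by decide) (by decide) (by decide)
  have h_4_6 : c s((2:Fin 9),4) = c s((3:Fin 9),5) → c s((2:Fin 9),4) = 0 :=
    close_imp h he4 he6 (a := 4) (b := 3) (by decide) (by decide) (by decide) (by decide)
  have h_5_6 : c s((3:Fin 9),4) ≠ c s((3:Fin 9),5) :=
    share_ne h he5 he6 (a := 3) (by decide) (by decide) (by decide)
  have h_1_7 : c s((0:Fin 9),2) = c s((4:Fin 9),6) → c s((0:Fin 9),2) = 0 :=
    close_imp h he1 he7 (a := 2) (b := 4) (by decide) (by decide) (by decide) (by decide)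
  have h_2_7 : c s((1:Fin 9),2) = c s((4:Fin 9),6) → c s((1:Fin 9),2) = 0 :=
    close_imp h he2 he7 (a := 2) (b := 4) (by decide) (by decide) (by decide) (by decide)
  have h_3_7 : c s((1:Fin 9),3) = c s((4:Fin 9),6) → c s((1:Fin 9),3) = 0 :=
    close_imp h he3 he7 (a := 3) (b := 4) (by decide) (by decide) (by decide) (by decide)
  have h_4_7 : c s((2:Fin 9),4) ≠ c s((4:Fin 9),6) :=
    share_ne h he4 he7 (a := 4) (by decide) (by decide) (by decide)
  have h_5_7 : c s((3:Fin 9),4) ≠ c s((4:Fin 9),6) :=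
    share_ne h he5 he7 (a := 4) (by decide) (by decide) (by decide)
  have h_6_7 : c s((3:Fin 9),5) = c s((4:Fin 9),6) → c s((3:Fin 9),5) = 0 :=
    close_imp h he6 he7 (a := 3) (b := 4) (by decide) (by decide) (by decide) (by decide)
  have h_3_8 : c s((1:Fin 9),3) = c s((5:Fin 9),6) → c s((1:Fin 9),3) = 0 :=
    close_imp h he3 he8 (a := 3) (b := 5) (by decide) (by decide) (by decide) (by decide)
  have h_4_8 : c s((2:Fin 9),4) = c s((5:Fin 9),6) → c s((2:Fin 9),4) = 0 :=
    close_imp h he4 he8 (a := 4) (b := 6) (by decide) (by decide) (by decide) (by decide)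
  have h_5_8 : c s((3:Fin 9),4) = c s((5:Fin 9),6) → c s((3:Fin 9),4) = 0 :=
    close_imp h he5 he8 (a := 3) (b := 5) (by decide) (by decide) (by decide) (by decide)
  have h_6_8 : c s((3:Fin 9),5) ≠ c s((5:Fin 9),6) :=
    share_ne h he6 he8 (a := 5) (by decide) (by decide) (by decide)
  have h_7_8 : c s((4:Fin 9),6) ≠ c s((5:Fin 9),6) :=
    share_ne h he7 he8 (a := 6) (by decide) (by decide) (by decide)
  have h_3_9 : c s((1:Fin 9),3) = c s((5:Fin 9),7) → c s((1:Fin 9),3) = 0 :=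
    close_imp h he3 he9 (a := 3) (b := 5) (by decide) (by decide) (by decide) (by decide)
  have h_5_9 : c s((3:Fin 9),4) = c s((5:Fin 9),7) → c s((3:Fin 9),4) = 0 :=
    close_imp h he5 he9 (a := 3) (b := 5) (by decide) (by decide) (by decide) (by decide)
  have h_6_9 : c s((3:Fin 9),5) ≠ c s((5:Fin 9),7) :=
    share_ne h he6 he9 (a := 5) (by decide) (by decide) (by decide)
  have h_7_9 : c s((4:Fin 9),6) = c s((5:Fin 9),7) → c s((4:Fin 9),6) = 0 :=
    close_imp h he7 he9 (a := 6) (b := 5) (by decide) (by decide) (by decide) (by decide)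
  have h_8_9 : c s((5:Fin 9),6) ≠ c s((5:Fin 9),7) :=
    share_ne h he8 he9 (a := 5) (by decide) (by decide) (by decide)
  have h_4_10 : c s((2:Fin 9),4) = c s((6:Fin 9),7) → c s((2:Fin 9),4) = 0 :=
    close_imp h he4 he10 (a := 4) (b := 6) (by decide) (by decide) (by decide) (by decide)
  have h_5_10 : c s((3:Fin 9),4) = c s((6:Fin 9),7) → c s((3:Fin 9),4) = 0 :=
    close_imp h he5 he10 (a := 4) (b := 6) (by decide) (by decide) (by decide) (by decide)
  have h_6_10 : c s((3:Fin 9),5) = c s((6:Fin 9),7) → c s((3:Fin 9),5) = 0 :=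
    close_imp h he6 he10 (a := 5) (b := 6) (by decide) (by decide) (by decide) (by decide)
  have h_7_10 : c s((4:Fin 9),6) ≠ c s((6:Fin 9),7) :=
    share_ne h he7 he10 (a := 6) (by decide) (by decide) (by decide)
  have h_8_10 : c s((5:Fin 9),6) ≠ c s((6:Fin 9),7) :=
    share_ne h he8 he10 (a := 6) (by decide) (by decide) (by decide)
  have h_9_10 : c s((5:Fin 9),7) ≠ c s((6:Fin 9),7) :=
    share_ne h he9 he10 (a := 7) (by decide) (by decide) (by decide)
  have h_0_11 : c s((0:Fin 9),1) ≠ c s((8:Fin 9),0) :=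
    share_ne h he0 he11 (a := 0) (by decide) (by decide) (by decide)
  have h_1_11 : c s((0:Fin 9),2) ≠ c s((8:Fin 9),0) :=
    share_ne h he1 he11 (a := 0) (by decide) (by decide) (by decide)
  have h_2_11 : c s((1:Fin 9),2) = c s((8:Fin 9),0) → c s((1:Fin 9),2) = 0 :=
    close_imp h he2 he11 (a := 1) (b := 0) (by decide) (by decide) (by decide) (by decide)
  have h_3_11 : c s((1:Fin 9),3) = c s((8:Fin 9),0) → c s((1:Fin 9),3) = 0 :=
    close_imp h he3 he11 (a := 1) (b := 0) (by decide) (by decide) (by decide) (by decide)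
  have h_4_11 : c s((2:Fin 9),4) = c s((8:Fin 9),0) → c s((2:Fin 9),4) = 0 :=
    close_imp h he4 he11 (a := 2) (b := 0) (by decide) (by decide) (by decide) (by decide)
  exact key (c s((0:Fin 9),1)) (c s((0:Fin 9),2)) h_0_1 (c s((1:Fin 9),2)) h_0_2 h_1_2 (c s((1:Fin 9),3)) h_0_3 h_1_3 h_2_3 (c s((2:Fin 9),4)) h_0_4 h_1_4 h_2_4 h_3_4 (c s((3:Fin 9),4)) h_0_5 h_1_5 h_2_5 h_3_5 h_4_5 (c s((3:Fin 9),5)) h_0_6 h_2_6 h_3_6 h_4_6 h_5_6 (c s((4:Fin 9),6)) h_1_7 h_2_7 h_3_7 h_4_7 h_5_7 h_6_7 (c s((5:Fin 9),6)) h_3_8 h_4_8 h_5_8 h_6_8 h_7_8 (c s((5:Fin 9),7)) h_3_9 h_5_9 h_6_9 h_7_9 h_8_9 (c s((6:Fin 9),7)) h_4_10 h_5_10 h_6_10 h_7_10 h_8_10 h_9_10 (c s((8:Fin 9),0)) h_0_11 h_1_11 h_2_11 h_3_11 h_4_11
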